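/- arXiv:2505.21394 — 6 statements merged into one kernel-verified Lean document; each statement's English description precedes it below -/
import Mathlib

section
/- Let L > 0, ρ ≥ 0, α ∈ (0, 1], and define η_t = 1/(L(1+ρ)(1+ρ+α√t)) for t ≥ 1, γ_t = 1/η_t - 1/η_{t-1}, and L_t = L + γ_t. Then for every integer t ≥ 3, η_t L_t ≤ 2. -/
/-!
Split `η_t L_t = L η_t + η_t γ_t`. The first term is `1 / ((1 + ρ)(1 + ρ + α√t)) ≤ 1`, and the
second is `η_t (1/η_t - 1/η_{t-1}) = 1 - η_t / η_{t-1} ≤ 1` because the step sizes are positive.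
-/

theorem mul_one_div_sub_one_div_le_one {a b : ℝ} (ha : 0 ≤ a) (hb : 0 ≤ b) :
    a * (1 / a - 1 / b) ≤ 1 := by
  rw [mul_sub, mul_one_div, mul_one_div]
  linarith [div_self_le_one a, div_nonneg ha hb]

theorem mul_one_div_mul_le_one (a : ℝ) {u : ℝ} (hu : 1 ≤ u) : a * (1 / (a * u)) ≤ 1 := by
  rw [mul_one_div, div_mul_eq_div_div]
  exact div_le_one_of_le₀ ((div_self_le_one a).trans hu) (by linarith)

theorem stmt_6_general (L ρ α : ℝ) (hL : 0 < L) (hρ : 0 ≤ ρ) (hα1 : 0 < α)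
    (η γ Lt : ℕ → ℝ)
    (hη : ∀ t, η t = 1 / (L * (1 + ρ) * (1 + ρ + α * Real.sqrt t)))
    (hγ : ∀ t, γ t = 1 / η t - 1 / η (t - 1))
    (hLt : ∀ t, Lt t = L + γ t) :
    ∀ t : ℕ, 3 ≤ t → η t * Lt t ≤ 2 := by
  intro t _
  have hη_nonneg (s : ℕ) : 0 ≤ η s := by rw [hη]; positivity
  have hscale : 1 ≤ (1 + ρ) * (1 + ρ + α * Real.sqrt t) :=
    one_le_mul_of_one_le_of_one_le (by linarith)
      (by linarith [mul_nonneg hα1.le (Real.sqrt_nonneg t)])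
  calc η t * Lt t = L * η t + η t * γ t := by rw [hLt]; ring
    _ ≤ 1 + 1 := by
      gcongr
      · rw [hη, mul_assoc L]
        exact mul_one_div_mul_le_one L hscale
      · rw [hγ]
        exact mul_one_div_sub_one_div_le_one (hη_nonneg t) (hη_nonneg (t - 1))
    _ = 2 := by norm_num

theorem stmt_6 (L ρ α : ℝ) (hL : 0 < L) (hρ : 0 ≤ ρ) (hα1 : 0 < α) (hα2 : α ≤ 1)
    (η γ Lt : ℕ → ℝ)
    (hη : ∀ t, η t = 1 / (L * (1 + ρ) * (1 + ρ + α * Real.sqrt t)))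
    (hγ : ∀ t, γ t = 1 / η t - 1 / η (t - 1))
    (hLt : ∀ t, Lt t = L + γ t) :
    ∀ t : ℕ, 3 ≤ t → η t * Lt t ≤ 2 :=
  stmt_6_general L ρ α hL hρ hα1 η γ Lt hη hγ hLt
end

section
/- Let L > 0, ρ ≥ 0, α ∈ (0, 1], η_t = 1/(L(1+ρ)(1+ρ+α√t)), γ_t = 1/η_t - 1/η_{t-1}, and L_t = L + γ_t. Then for every integer t ≥ 3, (1/2)η_t - (1/4)η_t² L_t - (1/2)ρ η_t² L_t ≥ η_t/8. -/
/-! With `D t = L (1 + ρ) (1 + ρ + α √t)` we have `η t = 1 / D t` and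
`Lt t = L + D t - D (t - 1) = L (1 + (1 + ρ) α (√t - √(t - 1)))`. The claim is equivalent to
`(1 + 2ρ) η_t Lt_t ≤ 3 / 2`, and since `√t - √(t - 1) ≤ 1 / 3` once `t ≥ 25 / 9`, this reduces to
`(1 + 2ρ)(4 + ρ) / 3 ≤ 3 (1 + ρ)² / 2`, whose slack is `(1 + 5ρ²) / 6`. -/

theorem sqrt_sub_sqrt_sub_one_le_one_third {x : ℝ} (hx : 25 / 9 ≤ x) :
    √x - √(x - 1) ≤ 1 / 3 := by
  have hlow : 4 / 3 ≤ √(x - 1) := Real.le_sqrt_of_sq_le (by linarith)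
  have hsq : √(x - 1) ^ 2 = x - 1 := Real.sq_sqrt (by linarith)
  have : √x ≤ √(x - 1) + 1 / 3 := Real.sqrt_le_iff.mpr ⟨by positivity, by nlinarith⟩
  linarith

theorem half_sub_mul_sq_ge_eighth {η Λ ρ : ℝ} (hη : 0 ≤ η) (h : (1 + 2 * ρ) * η * Λ ≤ 3 / 2) :
    1 / 2 * η - 1 / 4 * η ^ 2 * Λ - 1 / 2 * ρ * η ^ 2 * Λ ≥ η / 8 := by
  have hsplit : 1 / 2 * η - 1 / 4 * η ^ 2 * Λ - 1 / 2 * ρ * η ^ 2 * Λ - η / 8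
      = η / 4 * (3 / 2 - (1 + 2 * ρ) * η * Λ) := by ring
  nlinarith [mul_nonneg hη (sub_nonneg.mpr h)]

theorem one_add_two_mul_mul_le_of_le_one_third {ρ x y : ℝ} (hρ : 0 ≤ ρ) (hx : x ≤ 1 / 3)
    (hy : 0 ≤ y) :
    (1 + 2 * ρ) * (1 + (1 + ρ) * x) ≤ 3 / 2 * ((1 + ρ) * (1 + ρ + y)) := by
  have hx' : (1 + 2 * ρ) * (1 + ρ) * x ≤ (1 + 2 * ρ) * (1 + ρ) * (1 / 3) :=
    mul_le_mul_of_nonneg_left hx (by positivity)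
  nlinarith [mul_nonneg (by linarith : (0 : ℝ) ≤ 1 + ρ) hy, sq_nonneg ρ]

theorem stmt_9 (L ρ α : ℝ) (hL : 0 < L) (hρ : 0 ≤ ρ) (hα1 : 0 < α) (hα2 : α ≤ 1)
    (η γ Lt : ℕ → ℝ)
    (hη : ∀ t, η t = 1 / (L * (1 + ρ) * (1 + ρ + α * Real.sqrt t)))
    (hγ : ∀ t, γ t = 1 / η t - 1 / η (t - 1))
    (hLt : ∀ t, Lt t = L + γ t) :
    ∀ t : ℕ, 3 ≤ t →
      1 / 2 * η t - 1 / 4 * η t ^ 2 * Lt t - 1 / 2 * ρ * η t ^ 2 * Lt t ≥ η t / 8 := by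
  intro t ht
  have ht' : (25 / 9 : ℝ) ≤ t := by
    have : (3 : ℝ) ≤ t := by exact_mod_cast ht
    linarith
  have hcast : ((t - 1 : ℕ) : ℝ) = t - 1 := by rw [Nat.cast_sub (by omega), Nat.cast_one]
  set Δ := √(t : ℝ) - √((t : ℝ) - 1)
  have hΔ : α * Δ ≤ 1 / 3 := by
    have hΔ0 : 0 ≤ Δ := sub_nonneg.mpr (Real.sqrt_le_sqrt (by linarith))
    have hΔ3 := sqrt_sub_sqrt_sub_one_le_one_third ht'
    nlinarith
  have hE : 0 < (1 + ρ) * (1 + ρ + α * √(t : ℝ)) := by positivity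
  have hηt : η t = 1 / (L * ((1 + ρ) * (1 + ρ + α * √(t : ℝ)))) := by rw [hη, mul_assoc]
  have hLtt : Lt t = L * (1 + (1 + ρ) * (α * Δ)) := by
    rw [hLt, hγ, hη, hη, hcast, one_div_one_div, one_div_one_div]
    ring
  apply half_sub_mul_sq_ge_eighth (by rw [hηt]; positivity)
  calc (1 + 2 * ρ) * η t * Lt t
      = (1 + 2 * ρ) * (1 + (1 + ρ) * (α * Δ)) / ((1 + ρ) * (1 + ρ + α * √(t : ℝ))) := by
        rw [hηt, hLtt]
        field_simp
    _ ≤ 3 / 2 := by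
        rw [div_le_iff₀ hE]
        exact one_add_two_mul_mul_le_of_le_one_third hρ hΔ (by positivity)
end

section
/- Let L > 0, ρ ≥ 0, α ∈ (0, 1], η_t = 1/(L(1+ρ)(1+ρ+α√t)), γ_t = 1/η_t - 1/η_{t-1}, and L_t = L + γ_t. Then for every integer t ≥ 3, (γ_{t-1} - γ_t)/2 - (1/2)γ_t² η_t + (1/4)γ_t² η_t² L_t ≥ 0. -/
/-!
With `c = L (1 + ρ)` one has `1 / η_t = c (1 + ρ + α √t)`, so `γ_t = c α d_t` for the increments
`d_t = √t - √(t - 1) = 1 / (√t + √(t - 1))`. Multiplying by `c α`, the claim reduces to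
`α d_t² ≤ (d_{t-1} - d_t) (1 + ρ + α √t)`, and since `α ≤ 1 ≤ 1 + ρ` it suffices that
`d_t² ≤ (d_{t-1} - d_t) (1 + √t)`. This follows from `d_{t-1} - d_t = d_{t-1} d_t (d_{t-1} + d_t)`,
`d_t ≤ d_{t-1}` and `d_{t-1} (√(t-1) + √(t-2)) = 1 ≤ 2 d_{t-1} (1 + √t)`.
-/

open Real

lemma sqrt_sub_sqrt_sub_one_mul_add {x : ℝ} (hx : 1 ≤ x) :
    (√x - √(x - 1)) * (√x + √(x - 1)) = 1 := by
  have hx0 : (0 : ℝ) ≤ x := by linarith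
  have hx1 : (0 : ℝ) ≤ x - 1 := by linarith
  linear_combination Real.sq_sqrt hx0 - Real.sq_sqrt hx1

lemma sqrt_increment_sq_le {x : ℝ} (hx : 2 ≤ x) :
    (√x - √(x - 1)) ^ 2
      ≤ ((√(x - 1) - √(x - 2)) - (√x - √(x - 1))) * (1 + √x) := by
  set s := √x
  set b := √(x - 1)
  set a := √(x - 2)
  have ha : 0 ≤ a := Real.sqrt_nonneg _
  have hab : a ≤ b := Real.sqrt_le_sqrt (by linarith)
  have hbs : b ≤ s := Real.sqrt_le_sqrt (by linarith)
  have hb : 1 ≤ b := Real.one_le_sqrt.mpr (by linarith)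
  have h1 : (s - b) * (s + b) = 1 := sqrt_sub_sqrt_sub_one_mul_add (by linarith)
  have h0 : (b - a) * (b + a) = 1 := by
    have := sqrt_sub_sqrt_sub_one_mul_add (x := x - 1) (by linarith)
    rwa [show x - 1 - 1 = x - 2 by ring] at this
  have hd1 : s - b = 1 / (s + b) := eq_one_div_of_mul_eq_one_left h1
  have hd0 : b - a = 1 / (b + a) := eq_one_div_of_mul_eq_one_left h0
  have hd1_le : s - b ≤ b - a := by
    rw [hd1, hd0]
    exact one_div_le_one_div_of_le (by linarith) (by linarith)
  have hdiff : (b - a) - (s - b) = (b - a) * (s - b) * ((b - a) + (s - b)) := by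
    linear_combination (s - b) * h0 - (b - a) * h1
  calc (s - b) ^ 2 = (s - b) ^ 2 * ((b - a) * (b + a)) := by rw [h0, mul_one]
    _ ≤ (s - b) ^ 2 * ((b - a) * (2 * (1 + s))) := by gcongr; linarith
    _ = (b - a) * (s - b) * ((s - b) + (s - b)) * (1 + s) := by ring
    _ ≤ (b - a) * (s - b) * ((b - a) + (s - b)) * (1 + s) := by
        gcongr
    _ = ((b - a) - (s - b)) * (1 + s) := by rw [hdiff]

lemma gamma_eq {L ρ α : ℝ} {η γ : ℕ → ℝ}
    (hη : ∀ t, η t = 1 / (L * (1 + ρ) * (1 + ρ + α * Real.sqrt t)))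
    (hγ : ∀ t, γ t = 1 / η t - 1 / η (t - 1)) {t : ℕ} (ht : 1 ≤ t) :
    γ t = L * (1 + ρ) * α * (√t - √((t : ℝ) - 1)) := by
  rw [hγ, hη, hη, Nat.cast_sub ht, one_div_one_div, one_div_one_div, Nat.cast_one]
  ring

lemma gamma_nonneg {L ρ α : ℝ} {η γ : ℕ → ℝ} (hL : 0 < L) (hρ : 0 ≤ ρ) (hα : 0 < α)
    (hη : ∀ t, η t = 1 / (L * (1 + ρ) * (1 + ρ + α * Real.sqrt t)))
    (hγ : ∀ t, γ t = 1 / η t - 1 / η (t - 1)) {t : ℕ} (ht : 1 ≤ t) :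
    0 ≤ γ t := by
  rw [gamma_eq hη hγ ht]
  have : √((t : ℝ) - 1) ≤ √t := Real.sqrt_le_sqrt (by linarith)
  have : 0 ≤ √t - √((t : ℝ) - 1) := by linarith
  positivity

lemma gamma_sq_mul_eta_le {L ρ α : ℝ} {η γ : ℕ → ℝ} (hL : 0 < L) (hρ : 0 ≤ ρ) (hα1 : 0 < α)
    (hα2 : α ≤ 1)
    (hη : ∀ t, η t = 1 / (L * (1 + ρ) * (1 + ρ + α * Real.sqrt t)))
    (hγ : ∀ t, γ t = 1 / η t - 1 / η (t - 1)) {t : ℕ} (ht : 2 ≤ t) :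
    γ t ^ 2 * η t ≤ γ (t - 1) - γ t := by
  have hx : (2 : ℝ) ≤ t := by exact_mod_cast ht
  have hγt := gamma_eq hη hγ (t := t) (by omega)
  have hγt1 := gamma_eq hη hγ (t := t - 1) (by omega)
  rw [Nat.cast_sub (by omega : 1 ≤ t), Nat.cast_one, sub_sub, one_add_one_eq_two] at hγt1
  set s := √(t : ℝ)
  set d₁ := s - √((t : ℝ) - 1)
  set d₀ := √((t : ℝ) - 1) - √((t : ℝ) - 2)
  have hkey : d₁ ^ 2 ≤ (d₀ - d₁) * (1 + s) := sqrt_increment_sq_le hx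
  have hs : 0 ≤ s := Real.sqrt_nonneg _
  have hdiff : 0 ≤ d₀ - d₁ := nonneg_of_mul_nonneg_left ((sq_nonneg _).trans hkey) (by linarith)
  have hkey' : α * d₁ ^ 2 ≤ (d₀ - d₁) * (1 + ρ + α * s) := by
    calc α * d₁ ^ 2 ≤ α * ((d₀ - d₁) * (1 + s)) := mul_le_mul_of_nonneg_left hkey hα1.le
      _ = (d₀ - d₁) * (α + α * s) := by ring
      _ ≤ (d₀ - d₁) * (1 + ρ + α * s) := by gcongr; linarith
  rw [hη, hγt, hγt1, mul_one_div, div_le_iff₀ (by positivity)]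
  have hc : 0 ≤ (L * (1 + ρ)) ^ 2 * α := by positivity
  linear_combination mul_le_mul_of_nonneg_left hkey' hc

theorem stmt_10 (L ρ α : ℝ) (hL : 0 < L) (hρ : 0 ≤ ρ) (hα1 : 0 < α) (hα2 : α ≤ 1)
    (η γ Lt : ℕ → ℝ)
    (hη : ∀ t, η t = 1 / (L * (1 + ρ) * (1 + ρ + α * Real.sqrt t)))
    (hγ : ∀ t, γ t = 1 / η t - 1 / η (t - 1))
    (hLt : ∀ t, Lt t = L + γ t) :
    ∀ t : ℕ, 3 ≤ t →
      (γ (t - 1) - γ t) / 2 - 1 / 2 * γ t ^ 2 * η t + 1 / 4 * γ t ^ 2 * η t ^ 2 * Lt t ≥ 0 := by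
  intro t ht
  have hdescent := gamma_sq_mul_eta_le hL hρ hα1 hα2 hη hγ (t := t) (by omega)
  have hLt_nonneg : 0 ≤ Lt t := by
    rw [hLt]
    linarith [gamma_nonneg hL hρ hα1 hη hγ (t := t) (by omega)]
  have hlast : 0 ≤ 1 / 4 * γ t ^ 2 * η t ^ 2 * Lt t := by positivity
  linarith
end

section
/- Let η > 0, α ≥ 0, and define η_t = η/(1 + α√t) for t ≥ 1 and γ_t = 1/η_t - 1/η_{t-1} = (α/η)(√t - √(t-1)). Then for every integer t ≥ 2, γ_{t-1} - γ_t - γ_t² η_t ≥ 0. -/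
/-!
Write `v = √(t-1) - √(t-2)` and `u = √t - √(t-1)` for the consecutive differences, so that
`γ_{t-1} = (α/η) v`, `γ_t = (α/η) u` and `α u² / (1 + α√t) ≤ u² / √t`. The claim thus reduces to
the `α`-free inequality `u² ≤ √t (v - u)`. Since `v (√(t-1) + √(t-2)) = 1 = u (√t + √(t-1))`,
the second difference factors as `v - u = u v (u + v)`, and `u ≤ v`, `√t (u + v) ≥ 1` finish it.
-/

open Real

lemma sub_eq_mul_mul_add_of_mul_eq_one {a b s : ℝ} (hv : (b - a) * (b + a) = 1)
    (hu : (s - b) * (s + b) = 1) :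
    (b - a) - (s - b) = (s - b) * (b - a) * ((s - b) + (b - a)) := by
  linear_combination (s - b) * hv - (b - a) * hu

lemma sqrt_add_one_sub_sqrt_mul (x : ℝ) (hx : 0 ≤ x) :
    (√(x + 1) - √x) * (√(x + 1) + √x) = 1 := by
  linear_combination sq_sqrt (by linarith : 0 ≤ x + 1) - sq_sqrt hx

lemma sq_sqrt_sub_sqrt_le (x : ℝ) (hx : 0 ≤ x) :
    (√(x + 2) - √(x + 1)) ^ 2 ≤ √(x + 2) * ((√(x + 1) - √x) - (√(x + 2) - √(x + 1))) := by
  set a := √x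
  set b := √(x + 1)
  set s := √(x + 2)
  have hv : (b - a) * (b + a) = 1 := sqrt_add_one_sub_sqrt_mul x hx
  have hu : (s - b) * (s + b) = 1 := by
    have := sqrt_add_one_sub_sqrt_mul (x + 1) (by linarith)
    rwa [add_assoc, one_add_one_eq_two] at this
  have hab : a ≤ b := sqrt_le_sqrt (by linarith)
  have hbs : b ≤ s := sqrt_le_sqrt (by linarith)
  have ha : 0 ≤ a := sqrt_nonneg x
  have hu_le_hv : s - b ≤ b - a := by nlinarith
  have hs_mul : 1 ≤ s * ((s - b) + (b - a)) := by
    have hsa : (s - a) * (s + a) = 2 := by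
      linear_combination sq_sqrt (by linarith : 0 ≤ x + 2) - sq_sqrt hx
    nlinarith
  rw [sub_eq_mul_mul_add_of_mul_eq_one hv hu]
  have hu0 : 0 ≤ s - b := sub_nonneg.2 hbs
  calc (s - b) ^ 2 = (s - b) * (s - b) := sq _
    _ ≤ (s - b) * ((b - a) * (s * ((s - b) + (b - a)))) := by
        gcongr
        nlinarith
    _ = s * ((s - b) * (b - a) * ((s - b) + (b - a))) := by ring

lemma mul_sub_mul_sub_sq_mul_div_nonneg {η α s u v : ℝ} (hη : 0 < η) (hα : 0 ≤ α) (hs : 0 < s)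
    (h : u ^ 2 ≤ s * (v - u)) :
    0 ≤ α / η * v - α / η * u - (α / η * u) ^ 2 * (η / (1 + α * s)) := by
  have hden : 0 < 1 + α * s := by positivity
  have hvu : 0 ≤ v - u := nonneg_of_mul_nonneg_right (le_trans (sq_nonneg u) h) hs
  have key : α / η * v - α / η * u - (α / η * u) ^ 2 * (η / (1 + α * s)) =
      α / (η * (1 + α * s)) * ((v - u) + α * (s * (v - u) - u ^ 2)) := by
    field_simp
    ring
  rw [key]
  have := sub_nonneg.2 h
  positivity

theorem stmt_11 (η α : ℝ) (hη : 0 < η) (hα : 0 ≤ α)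
    (ηs γ : ℕ → ℝ)
    (hηs : ∀ t, ηs t = η / (1 + α * Real.sqrt t))
    (hγ : ∀ t ≥ 1, γ t = 1 / ηs t - 1 / ηs (t - 1)) :
    ∀ t : ℕ, 2 ≤ t → γ (t - 1) - γ t - γ t ^ 2 * ηs t ≥ 0 := by
  intro t ht
  obtain ⟨n, rfl⟩ : ∃ n, t = n + 2 := ⟨t - 2, by omega⟩
  have hγ_succ : ∀ m : ℕ, γ (m + 1) = α / η * (√((m : ℝ) + 1) - √m) := by
    intro m
    rw [hγ (m + 1) (by omega), Nat.add_sub_cancel, hηs, hηs, one_div_div, one_div_div]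
    push_cast
    ring
  have hx : ((n + 1 : ℕ) : ℝ) + 1 = n + 2 := by push_cast; ring
  rw [show n + 2 - 1 = n + 1 by omega, hγ_succ, hγ_succ, hηs, hx]
  push_cast
  exact mul_sub_mul_sub_sq_mul_div_nonneg hη hα (by positivity)
    (sq_sqrt_sub_sqrt_le n n.cast_nonneg)
end

section
/- For every real τ ≥ 2, 4√(τ-1) - √(τ-2) - 3√τ + 1/√τ ≥ 0. -/
/-!
Multiplying by `√τ` turns the inequality into `√(τ(τ-2)) + 3τ - 1 ≤ 4√(τ(τ-1))`. Squaring it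
isolates the remaining root as `2(3τ-1)√(τ(τ-2)) ≤ 6τ² - 8τ - 1`, and squaring once more leaves
the polynomial inequality `0 ≤ 24τ + 1`.
-/

open Real

lemma two_mul_sqrt_mul_sub_two_le {τ : ℝ} (hτ : 2 ≤ τ) :
    2 * (3 * τ - 1) * √(τ * (τ - 2)) ≤ 6 * τ ^ 2 - 8 * τ - 1 := by
  have hsq : √(τ * (τ - 2)) ^ 2 = τ * (τ - 2) := sq_sqrt (by nlinarith)
  have hlhs : 0 ≤ 2 * (3 * τ - 1) * √(τ * (τ - 2)) :=
    mul_nonneg (by linarith) (sqrt_nonneg _)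
  refine (pow_le_pow_iff_left₀ hlhs (by nlinarith) two_ne_zero).mp ?_
  calc (2 * (3 * τ - 1) * √(τ * (τ - 2))) ^ 2
      = (6 * τ ^ 2 - 8 * τ - 1) ^ 2 - (24 * τ + 1) := by rw [mul_pow, hsq]; ring
    _ ≤ (6 * τ ^ 2 - 8 * τ - 1) ^ 2 := by linarith

lemma sqrt_mul_sub_two_add_le {τ : ℝ} (hτ : 2 ≤ τ) :
    √(τ * (τ - 2)) + 3 * τ - 1 ≤ 4 * √(τ * (τ - 1)) := by
  have hsq₂ : √(τ * (τ - 2)) ^ 2 = τ * (τ - 2) := sq_sqrt (by nlinarith)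
  have hsq₁ : √(τ * (τ - 1)) ^ 2 = τ * (τ - 1) := sq_sqrt (by nlinarith)
  have hlhs : 0 ≤ √(τ * (τ - 2)) + 3 * τ - 1 := by linarith [sqrt_nonneg (τ * (τ - 2))]
  refine (pow_le_pow_iff_left₀ hlhs (by positivity) two_ne_zero).mp ?_
  calc (√(τ * (τ - 2)) + 3 * τ - 1) ^ 2
      = 10 * τ ^ 2 - 8 * τ + 1 + 2 * (3 * τ - 1) * √(τ * (τ - 2)) := by
        linear_combination hsq₂
    _ ≤ 16 * τ ^ 2 - 16 * τ := by linarith [two_mul_sqrt_mul_sub_two_le hτ]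
    _ = (4 * √(τ * (τ - 1))) ^ 2 := by linear_combination -16 * hsq₁

theorem stmt_13 : ∀ τ : ℝ, 2 ≤ τ →
    4 * Real.sqrt (τ - 1) - Real.sqrt (τ - 2) - 3 * Real.sqrt τ + 1 / Real.sqrt τ ≥ 0 := by
  intro τ hτ
  have hτ₀ : 0 ≤ τ := by linarith
  have hroot : 0 < √τ := sqrt_pos.mpr (by linarith)
  have hkey := sqrt_mul_sub_two_add_le hτ
  rw [sqrt_mul hτ₀, sqrt_mul hτ₀] at hkey
  have hscaled : 4 * √(τ - 1) - √(τ - 2) - 3 * √τ + 1 / √τ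
      = (4 * (√τ * √(τ - 1)) - √τ * √(τ - 2) - 3 * τ + 1) / √τ := by
    field_simp
    linear_combination -3 * mul_self_sqrt hτ₀
  rw [ge_iff_le, hscaled]
  exact div_nonneg (by linarith) hroot.le
end

section
/- Let L > 0, σ > 0 and η_t = 1/(L + σ√t). Then Σ_{t=1}^T η_t²·(L + σ(√t - √(t-1))) ≤ (2/σ²)·log(1 + σ√T/L)·(L + σ) ≤ (2(L+σ)/σ²)·log(1 + σ√T/L). -/
/-!
Since `√t - √(t-1) ≤ 1`, each summand is at most `η_t² (L + σ)`. Writing `s = √t`, `p = √(t-1)`,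
we have `s - p = 1 / (s + p) ≥ 1 / (2s)`, so `η_t ≤ 2 (s - p) / σ`, while
`log (L + σ s) - log (L + σ p) ≥ σ (s - p) / (L + σ s) = σ (s - p) η_t`. Hence
`η_t² ≤ (2/σ²) (log (L + σ √t) - log (L + σ √(t-1)))`, and the sum telescopes to
`(2/σ²) log ((L + σ √T) / L)`.
-/

open Real Finset

lemma Real.sub_div_le_log_sub_log {a b : ℝ} (ha : 0 < a) (hb : 0 < b) :
    (a - b) / a ≤ log a - log b := by
  have h := one_sub_inv_le_log_of_pos (div_pos ha hb)
  rwa [log_div ha.ne' hb.ne', inv_div, one_sub_div ha.ne'] at h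

lemma Real.sqrt_sub_sqrt_sub_one_le_one {x : ℝ} (hx : 1 ≤ x) : √x - √(x - 1) ≤ 1 := by
  nlinarith [sq_sqrt (by linarith : 0 ≤ x), sq_sqrt (by linarith : 0 ≤ x - 1),
    sqrt_nonneg x, sqrt_nonneg (x - 1)]

lemma Real.one_le_two_mul_sqrt_mul_sub_sqrt {x : ℝ} (hx : 0 ≤ x) :
    1 ≤ 2 * √(x + 1) * (√(x + 1) - √x) := by
  nlinarith [sq_sqrt (by linarith : 0 ≤ x + 1), sq_sqrt hx, sqrt_nonneg x,
    sqrt_le_sqrt (by linarith : x ≤ x + 1)]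

lemma inv_sq_le_log_sub_log {L σ s p : ℝ} (hL : 0 < L) (hσ : 0 < σ) (hp : 0 ≤ p) (hps : p ≤ s)
    (hgap : 1 ≤ 2 * s * (s - p)) :
    (1 / (L + σ * s)) ^ 2 ≤ 2 / σ ^ 2 * (log (L + σ * s) - log (L + σ * p)) := by
  have hb : 0 < L + σ * p := by positivity
  have ha : 0 < L + σ * s := by nlinarith
  have hinv : 1 / (L + σ * s) ≤ 2 * (s - p) / σ := by
    rw [div_le_div_iff₀ ha hσ]
    nlinarith
  calc (1 / (L + σ * s)) ^ 2 ≤ 2 * (s - p) / σ * (1 / (L + σ * s)) := by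
        rw [sq]; gcongr
    _ = 2 / σ ^ 2 * ((L + σ * s - (L + σ * p)) / (L + σ * s)) := by
        field_simp; ring
    _ ≤ 2 / σ ^ 2 * (log (L + σ * s) - log (L + σ * p)) := by
        gcongr
        exact sub_div_le_log_sub_log ha hb

lemma sum_inv_sq_add_mul_sqrt_le {L σ : ℝ} (hL : 0 < L) (hσ : 0 < σ) (T : ℕ) :
    ∑ t ∈ Icc 1 T, (1 / (L + σ * √t)) ^ 2 ≤ 2 / σ ^ 2 * log (1 + σ * √T / L) := by
  suffices h : ∑ t ∈ Icc 1 T, (1 / (L + σ * √t)) ^ 2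
      ≤ 2 / σ ^ 2 * (log (L + σ * √T) - log L) by
    rwa [← log_div (by positivity) hL.ne', add_div, div_self hL.ne'] at h
  induction T with
  | zero => simp
  | succ n ih =>
    rw [sum_Icc_succ_top (by omega)]
    have hstep := inv_sq_le_log_sub_log hL hσ (sqrt_nonneg n) (sqrt_le_sqrt (by linarith))
      (one_le_two_mul_sqrt_mul_sub_sqrt n.cast_nonneg)
    push_cast
    linarith

theorem stmt_19 (L σ : ℝ) (hL : 0 < L) (hσ : 0 < σ)
    (η : ℕ → ℝ) (hη : ∀ t, η t = 1 / (L + σ * Real.sqrt t)) (T : ℕ) :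
    ∑ t ∈ Finset.Icc 1 T, η t ^ 2 * (L + σ * (Real.sqrt t - Real.sqrt ((t : ℝ) - 1)))
      ≤ 2 / σ ^ 2 * Real.log (1 + σ * Real.sqrt T / L) * (L + σ) ∧
    2 / σ ^ 2 * Real.log (1 + σ * Real.sqrt T / L) * (L + σ)
      ≤ 2 * (L + σ) / σ ^ 2 * Real.log (1 + σ * Real.sqrt T / L) := by
  refine ⟨?_, (by ring : _ = _).le⟩
  calc ∑ t ∈ Icc 1 T, η t ^ 2 * (L + σ * (√t - √((t : ℝ) - 1)))
      ≤ ∑ t ∈ Icc 1 T, (1 / (L + σ * √t)) ^ 2 * (L + σ) := by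
        refine sum_le_sum fun t ht => ?_
        rw [hη]
        gcongr
        exact mul_le_of_le_one_right hσ.le
          (sqrt_sub_sqrt_sub_one_le_one (by exact_mod_cast (mem_Icc.1 ht).1))
    _ = (∑ t ∈ Icc 1 T, (1 / (L + σ * √t)) ^ 2) * (L + σ) := (sum_mul ..).symm
    _ ≤ 2 / σ ^ 2 * log (1 + σ * √T / L) * (L + σ) := by
        gcongr
        exact sum_inv_sq_add_mul_sqrt_le hL hσ T
end
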